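/- arXiv:2201.08474 — 4 statements merged into one kernel-verified Lean document; each statement's English description precedes it below -/
import Mathlib

section
/- With A, B as above and c ∈ ℝᵈ, the minimum of ‖v‖₂ over all v ∈ ℝⁿ satisfying (Ac + v)ᵀ(AAᵀ − BBᵀ)(Ac + v) ≤ 0 equals ‖c‖₂/√2, and any minimizer v = A v_a + B v_b satisfies v_a = −c/2 and ‖v_b‖₂ = ‖c‖₂/2. -/
/-!
Write a perturbation as `v = A a + B b`, which is possible because `[A B]` is orthogonal. In
these coordinates `‖v‖² = ‖a‖² + ‖b‖²` and the constraint reads `‖c + a‖² ≤ ‖b‖²`, so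
`‖v‖² ≥ ‖a‖² + ‖c + a‖² = 2 ‖a + c/2‖² + ‖c‖²/2 ≥ ‖c‖²/2`. Equality forces `a = -c/2` and
`‖b‖² = ‖c + a‖² = ‖c‖²/4`, and such a `b` exists as soon as `B` has a column.
-/

open Matrix

/-- Euclidean (ℓ²) norm of a vector. -/
noncomputable def norm2 {k : ℕ} (v : Fin k → ℝ) : ℝ :=
  Real.sqrt (∑ i, v i ^ 2)

namespace Matrix

theorem mulVec_dotProduct_mulVec {R m k l : Type*} [CommSemiring R] [Fintype m] [Fintype k]
    [Fintype l] (M : Matrix m k R) (N : Matrix m l R) (x : k → R) (y : l → R) :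
    M *ᵥ x ⬝ᵥ N *ᵥ y = (Nᵀ * M) *ᵥ x ⬝ᵥ y := by
  rw [dotProduct_mulVec, ← mulVec_transpose, mulVec_mulVec]

section OrthonormalPair

variable {R m k l : Type*} [CommRing R] [Fintype m] [Fintype k] [Fintype l]
  {A : Matrix m k R} {B : Matrix m l R}

theorem mulVec_transpose_mulVec_add_mulVec_transpose_mulVec [DecidableEq m]
    (h : A * Aᵀ + B * Bᵀ = 1) (v : m → R) :
    A *ᵥ (Aᵀ *ᵥ v) + B *ᵥ (Bᵀ *ᵥ v) = v := by
  rw [mulVec_mulVec, mulVec_mulVec, ← add_mulVec, h, one_mulVec]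

variable [DecidableEq k] [DecidableEq l]

theorem dotProduct_self_mulVec_add_mulVec (hA : Aᵀ * A = 1) (hB : Bᵀ * B = 1)
    (hAB : Aᵀ * B = 0) (a : k → R) (b : l → R) :
    (A *ᵥ a + B *ᵥ b) ⬝ᵥ (A *ᵥ a + B *ᵥ b) = a ⬝ᵥ a + b ⬝ᵥ b := by
  have hBA : Bᵀ * A = 0 := by simpa using congrArg transpose hAB
  simp only [add_dotProduct, dotProduct_add, mulVec_dotProduct_mulVec, hA, hB, hAB, hBA,
    one_mulVec, zero_mulVec, zero_dotProduct]
  ring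

theorem sub_mulVec_mulVec_add_mulVec (hA : Aᵀ * A = 1) (hB : Bᵀ * B = 1)
    (hAB : Aᵀ * B = 0) (a : k → R) (b : l → R) :
    (A * Aᵀ - B * Bᵀ) *ᵥ (A *ᵥ a + B *ᵥ b) = A *ᵥ a - B *ᵥ b := by
  have hBA : Bᵀ * A = 0 := by simpa using congrArg transpose hAB
  rw [mulVec_add, mulVec_mulVec, mulVec_mulVec, Matrix.sub_mul, Matrix.sub_mul, Matrix.mul_assoc,
    Matrix.mul_assoc, Matrix.mul_assoc, Matrix.mul_assoc, hA, hB, hAB, hBA]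
  simp [neg_mulVec, sub_eq_add_neg]

theorem mulVec_add_mulVec_dotProduct_sub_mulVec (hA : Aᵀ * A = 1) (hB : Bᵀ * B = 1)
    (hAB : Aᵀ * B = 0) (a : k → R) (b : l → R) :
    (A *ᵥ a + B *ᵥ b) ⬝ᵥ (A * Aᵀ - B * Bᵀ) *ᵥ (A *ᵥ a + B *ᵥ b) = a ⬝ᵥ a - b ⬝ᵥ b := by
  have hBA : Bᵀ * A = 0 := by simpa using congrArg transpose hAB
  rw [sub_mulVec_mulVec_add_mulVec hA hB hAB]
  simp only [add_dotProduct, dotProduct_sub, mulVec_dotProduct_mulVec, hA, hB, hAB, hBA,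
    one_mulVec, zero_mulVec, zero_dotProduct]
  ring

theorem mul_transpose_add_mul_transpose_eq_one [DecidableEq m] (e : m ≃ k ⊕ l)
    (hA : Aᵀ * A = 1) (hB : Bᵀ * B = 1) (hAB : Aᵀ * B = 0) :
    A * Aᵀ + B * Bᵀ = 1 := by
  have hBA : Bᵀ * A = 0 := by simpa using congrArg transpose hAB
  have h : fromRows Aᵀ Bᵀ * fromCols A B = 1 := by
    rw [fromRows_mul_fromCols, hA, hB, hAB, hBA, fromBlocks_one]
  rw [← fromCols_mul_fromRows]
  exact (fromCols_mul_fromRows_eq_one_comm e A B Aᵀ Bᵀ).mpr h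

end OrthonormalPair

end Matrix

section Ordered

variable {R k l : Type*} [Field R] [LinearOrder R] [IsStrictOrderedRing R] [Fintype k]
  [Fintype l] {a c : k → R} {b : l → R}

theorem dotProduct_self_nonneg (v : k → R) : 0 ≤ v ⬝ᵥ v :=
  Finset.sum_nonneg fun i _ => mul_self_nonneg (v i)

theorem dotProduct_self_add_dotProduct_self_add (a c : k → R) :
    a ⬝ᵥ a + (c + a) ⬝ᵥ (c + a) =
      2 * ((a + (1 / 2 : R) • c) ⬝ᵥ (a + (1 / 2 : R) • c)) + c ⬝ᵥ c / 2 := by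
  simp only [dotProduct_add, add_dotProduct, dotProduct_smul, smul_dotProduct, smul_eq_mul,
    dotProduct_comm c a]
  ring

theorem dotProduct_self_half_smul (c : k → R) :
    ((1 / 2 : R) • c) ⬝ᵥ ((1 / 2 : R) • c) = c ⬝ᵥ c / 4 := by
  simp only [dotProduct_smul, smul_dotProduct, smul_eq_mul]
  ring

theorem half_dotProduct_self_le (h : (c + a) ⬝ᵥ (c + a) ≤ b ⬝ᵥ b) :
    c ⬝ᵥ c / 2 ≤ a ⬝ᵥ a + b ⬝ᵥ b := by
  linarith [dotProduct_self_add_dotProduct_self_add a c,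
    dotProduct_self_nonneg (a + (1 / 2 : R) • c)]

theorem eq_neg_half_smul_of_dotProduct_self_add_eq (h : (c + a) ⬝ᵥ (c + a) ≤ b ⬝ᵥ b)
    (heq : a ⬝ᵥ a + b ⬝ᵥ b = c ⬝ᵥ c / 2) :
    a = -((1 / 2 : R) • c) ∧ b ⬝ᵥ b = c ⬝ᵥ c / 4 := by
  have hsq : (a + (1 / 2 : R) • c) ⬝ᵥ (a + (1 / 2 : R) • c) = 0 := by
    linarith [dotProduct_self_add_dotProduct_self_add a c,
      dotProduct_self_nonneg (a + (1 / 2 : R) • c)]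
  have ha : a = -((1 / 2 : R) • c) := eq_neg_of_add_eq_zero_left (dotProduct_self_eq_zero.mp hsq)
  refine ⟨ha, ?_⟩
  rw [ha, neg_dotProduct, dotProduct_neg, neg_neg, dotProduct_self_half_smul] at heq
  linarith

end Ordered

theorem norm2_eq_sqrt_dotProduct {k : ℕ} (v : Fin k → ℝ) : norm2 v = √(v ⬝ᵥ v) := by
  simp [norm2, dotProduct, sq]

/-- The minimum of `‖v‖₂` over all `v` with
`(Ac + v)ᵀ(AAᵀ − BBᵀ)(Ac + v) ≤ 0` equals `‖c‖₂/√2`, and any minimizer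
`v = A v_a + B v_b` satisfies `v_a = −c/2` and `‖v_b‖₂ = ‖c‖₂/2`. -/
theorem min_perturbation {n d : ℕ} (hd : d < n)
    (A : Matrix (Fin n) (Fin d) ℝ) (B : Matrix (Fin n) (Fin (n - d)) ℝ)
    (hA : Aᵀ * A = 1) (hB : Bᵀ * B = 1) (hAB : Aᵀ * B = 0)
    (c : Fin d → ℝ) :
    IsLeast {r : ℝ | ∃ v : Fin n → ℝ,
        (A.mulVec c + v) ⬝ᵥ (A * Aᵀ - B * Bᵀ).mulVec (A.mulVec c + v) ≤ 0 ∧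
        norm2 v = r}
      (norm2 c / Real.sqrt 2) ∧
    ∀ (va : Fin d → ℝ) (vb : Fin (n - d) → ℝ),
      (A.mulVec c + (A.mulVec va + B.mulVec vb)) ⬝ᵥ
          (A * Aᵀ - B * Bᵀ).mulVec (A.mulVec c + (A.mulVec va + B.mulVec vb)) ≤ 0 →
      norm2 (A.mulVec va + B.mulVec vb) = norm2 c / Real.sqrt 2 →
      va = -((1 / 2 : ℝ) • c) ∧ norm2 vb = norm2 c / 2 := by
  have hconstraint (a : Fin d → ℝ) (b : Fin (n - d) → ℝ) :
      (A *ᵥ c + (A *ᵥ a + B *ᵥ b)) ⬝ᵥ (A * Aᵀ - B * Bᵀ) *ᵥ (A *ᵥ c + (A *ᵥ a + B *ᵥ b)) ≤ 0 ↔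
        (c + a) ⬝ᵥ (c + a) ≤ b ⬝ᵥ b := by
    rw [← add_assoc, ← mulVec_add, mulVec_add_mulVec_dotProduct_sub_mulVec hA hB hAB, sub_nonpos]
  have hnorm (a : Fin d → ℝ) (b : Fin (n - d) → ℝ) :
      norm2 (A *ᵥ a + B *ᵥ b) = √(a ⬝ᵥ a + b ⬝ᵥ b) := by
    rw [norm2_eq_sqrt_dotProduct, dotProduct_self_mulVec_add_mulVec hA hB hAB]
  have htarget : norm2 c / √2 = √(c ⬝ᵥ c / 2) := by
    rw [norm2_eq_sqrt_dotProduct, Real.sqrt_div (dotProduct_self_nonneg c)]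
  have hcomplete : A * Aᵀ + B * Bᵀ = 1 := mul_transpose_add_mul_transpose_eq_one
    ((finCongr (by omega)).trans finSumFinEquiv.symm) hA hB hAB
  refine ⟨⟨?_, ?_⟩, fun a b hab hv => ?_⟩
  · have j : Fin (n - d) := ⟨0, by omega⟩
    have hb : Pi.single j (norm2 c / 2) ⬝ᵥ Pi.single j (norm2 c / 2) = c ⬝ᵥ c / 4 := by
      rw [single_dotProduct, Pi.single_eq_same, norm2_eq_sqrt_dotProduct, div_mul_div_comm,
        Real.mul_self_sqrt (dotProduct_self_nonneg c)]
      norm_num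
    refine ⟨A *ᵥ -((1 / 2 : ℝ) • c) + B *ᵥ Pi.single j (norm2 c / 2), ?_, ?_⟩
    · rw [hconstraint, hb, show c + -((1 / 2 : ℝ) • c) = (1 / 2 : ℝ) • c by module,
        dotProduct_self_half_smul]
    · rw [hnorm, htarget, neg_dotProduct, dotProduct_neg, neg_neg, dotProduct_self_half_smul, hb]
      congr 1
      ring
  · rintro _ ⟨v, hv, rfl⟩
    rw [← mulVec_transpose_mulVec_add_mulVec_transpose_mulVec hcomplete v, hconstraint] at hv
    rw [← mulVec_transpose_mulVec_add_mulVec_transpose_mulVec hcomplete v, hnorm, htarget]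
    exact Real.sqrt_le_sqrt (half_dotProduct_self_le hv)
  · rw [hconstraint] at hab
    rw [hnorm, htarget, Real.sqrt_inj (add_nonneg (dotProduct_self_nonneg a)
      (dotProduct_self_nonneg b)) (div_nonneg (dotProduct_self_nonneg c) zero_le_two)] at hv
    obtain ⟨ha, hb⟩ := eq_neg_half_smul_of_dotProduct_self_add_eq hab hv
    refine ⟨ha, ?_⟩
    rw [norm2_eq_sqrt_dotProduct, hb, norm2_eq_sqrt_dotProduct, show (4 : ℝ) = 2 ^ 2 by norm_num,
      Real.sqrt_div' _ (by positivity), Real.sqrt_sq zero_le_two]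
end

section
/- Let C be a real-valued random variable with continuous (atomless) cumulative distribution function G, and let C' be an independent copy of C. Define the transfer event: C' ∈ T(C) iff |C' − C/2| ≤ |C/2|. Then P(C' ∈ T(C)) = 1/2 − G(0) + G(0)², which lies in [1/4, 1/2], with value 1/2 attained exactly when G(0) ∈ {0, 1}. -/
/-!
Let `ν` be the law of `C`. The transfer event is `{(c, c') | c' ∈ [[0, c]]}`, the union of the
lower triangle of `[0, ∞)²` and the upper triangle of `(-∞, 0]²`, which meet only at the origin.
As `ν` has no atoms, the diagonal is `ν ⊗ ν`-null, so by the symmetry `(c, c') ↦ (c', c)` each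
triangle of a square `u × u` carries half of its mass `ν(u)²`. Hence the probability is
`((1 - G 0)² + (G 0)²) / 2 = 1/2 - G 0 + (G 0)²`, and the bounds are those of this quadratic on
`[0, 1]`.
-/

open MeasureTheory ProbabilityTheory Set

namespace MeasureTheory.Measure

variable {α : Type*} [MeasurableSpace α] (ν : Measure α) [SFinite ν]

lemma prod_self_diagonal_eq_zero [MeasurableEq α] [NullSingletonClass ν] :
    ν.prod ν (diagonal α) = 0 := by
  rw [prod_apply measurableSet_diagonal]
  simp [Set.preimage, diagonal]

variable [LinearOrder α] [TopologicalSpace α] [OrderClosedTopology α] [SecondCountableTopology α]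
  [OpensMeasurableSpace α] {u : Set α}

lemma prod_self_setOf_fst_le_snd_eq (hu : MeasurableSet u) :
    ν.prod ν {q ∈ u ×ˢ u | q.1 ≤ q.2} = ν.prod ν {q ∈ u ×ˢ u | q.2 ≤ q.1} := by
  have hswap : Prod.swap ⁻¹' {q ∈ u ×ˢ u | q.1 ≤ q.2} = {q ∈ u ×ˢ u | q.2 ≤ q.1} := by
    ext; simp [and_comm]
  rw [← hswap, measurePreserving_swap.measure_preimage]
  exact ((hu.prod hu).inter (measurableSet_le measurable_fst measurable_snd)).nullMeasurableSet

variable [NullSingletonClass ν]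

lemma two_mul_prod_self_setOf_snd_le_fst (hu : MeasurableSet u) :
    2 * ν.prod ν {q ∈ u ×ˢ u | q.2 ≤ q.1} = ν u ^ 2 := by
  set L := {q ∈ u ×ˢ u | q.2 ≤ q.1}
  set U := {q ∈ u ×ˢ u | q.1 ≤ q.2}
  have hcover : L ∪ U = u ×ˢ u := by
    ext q
    simp only [L, U, mem_union, mem_sep_iff]
    exact ⟨fun h => h.elim And.left And.left, fun h => (le_total q.2 q.1).imp (⟨h, ·⟩) (⟨h, ·⟩)⟩
  have hdiag : L ∩ U ⊆ diagonal α := fun q h => le_antisymm h.2.2 h.1.2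
  have hU : MeasurableSet U := (hu.prod hu).inter (measurableSet_le measurable_fst measurable_snd)
  calc 2 * ν.prod ν L = ν.prod ν (L ∪ U) + ν.prod ν (L ∩ U) := by
        rw [measure_union_add_inter L hU, prod_self_setOf_fst_le_snd_eq ν hu, two_mul]
    _ = ν u ^ 2 := by
        rw [measure_mono_null hdiag (prod_self_diagonal_eq_zero ν), add_zero, hcover, prod_prod, sq]

lemma two_mul_prod_self_setOf_fst_le_snd (hu : MeasurableSet u) :
    2 * ν.prod ν {q ∈ u ×ˢ u | q.1 ≤ q.2} = ν u ^ 2 := by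
  rw [prod_self_setOf_fst_le_snd_eq ν hu, two_mul_prod_self_setOf_snd_le_fst ν hu]

lemma two_mul_prod_self_setOf_snd_mem_uIcc (a : α) :
    2 * ν.prod ν {q | q.2 ∈ uIcc a q.1} = ν (Ici a) ^ 2 + ν (Iic a) ^ 2 := by
  set A := {q ∈ Ici a ×ˢ Ici a | q.2 ≤ q.1}
  set B := {q ∈ Iic a ×ˢ Iic a | q.1 ≤ q.2}
  have hsplit : {q : α × α | q.2 ∈ uIcc a q.1} = A ∪ B := by
    ext q
    simp only [A, B, mem_ofPred_eq, mem_uIcc, mem_union, mem_prod, mem_Ici, mem_Iic]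
    constructor
    · rintro (h | h)
      · exact Or.inl ⟨⟨h.1.trans h.2, h.1⟩, h.2⟩
      · exact Or.inr ⟨⟨h.1.trans h.2, h.2⟩, h.1⟩
    · rintro (h | h)
      · exact Or.inl ⟨h.1.2, h.2⟩
      · exact Or.inr ⟨h.2, h.1.2⟩
  have hdiag : A ∩ B ⊆ diagonal α := fun q h => le_antisymm h.2.2 h.1.2
  have hB : MeasurableSet B :=
    (measurableSet_Iic.prod measurableSet_Iic).inter (measurableSet_le measurable_fst measurable_snd)
  rw [hsplit, ← add_zero (ν.prod ν (A ∪ B)),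
    ← measure_mono_null hdiag (prod_self_diagonal_eq_zero ν), measure_union_add_inter A hB,
    mul_add, two_mul_prod_self_setOf_snd_le_fst ν measurableSet_Ici,
    two_mul_prod_self_setOf_fst_le_snd ν measurableSet_Iic]

end MeasureTheory.Measure

lemma ProbabilityTheory.IdentDistrib.measure_preimage_prodMk_of_indepFun {Ω β : Type*}
    [MeasurableSpace Ω] [MeasurableSpace β] {μ : Measure Ω} [IsFiniteMeasure μ] {X Y : Ω → β}
    (hX : Measurable X) (hY : Measurable Y) (hindep : IndepFun X Y μ) (hid : IdentDistrib X Y μ μ)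
    {s : Set (β × β)} (hs : MeasurableSet s) :
    μ ((fun ω => (X ω, Y ω)) ⁻¹' s) = (μ.map X).prod (μ.map X) s := by
  rw [← Measure.map_apply (hX.prodMk hY) hs,
    (indepFun_iff_map_prod_eq_prod_map_map hX.aemeasurable hY.aemeasurable).mp hindep,
    ← hid.map_eq]

lemma abs_sub_half_le_abs_half_iff {c c' : ℝ} : |c' - c / 2| ≤ |c / 2| ↔ c' ∈ uIcc 0 c := by
  rw [abs_le, mem_uIcc]
  cases abs_cases (c / 2) <;> grind

/-- Lemma 1, toy model in dimension 1: for i.i.d. real `C`, `C'` with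
continuous (atomless) CDF `G`, the probability of the transfer event
`|C' − C/2| ≤ |C/2|` equals `1/2 − G(0) + G(0)²`, which lies in `[1/4, 1/2]`,
with value `1/2` exactly when `G(0) ∈ {0, 1}`. -/
theorem et_one_dim {Ω : Type*} [MeasurableSpace Ω]
    (μ : Measure Ω) [IsProbabilityMeasure μ]
    (C C' : Ω → ℝ) (hC : Measurable C) (hC' : Measurable C')
    (hindep : IndepFun C C' μ) (hid : IdentDistrib C C' μ μ)
    [NullSingletonClass (μ.map C)]
    (G : ℝ → ℝ) (hG : ∀ x, G x = (μ {ω | C ω ≤ x}).toReal) :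
    (μ {ω | |C' ω - C ω / 2| ≤ |C ω / 2|}).toReal = 1 / 2 - G 0 + (G 0) ^ 2 ∧
    1 / 4 ≤ 1 / 2 - G 0 + (G 0) ^ 2 ∧
    1 / 2 - G 0 + (G 0) ^ 2 ≤ 1 / 2 ∧
    (1 / 2 - G 0 + (G 0) ^ 2 = 1 / 2 ↔ G 0 = 0 ∨ G 0 = 1) := by
  set ν := μ.map C
  have : IsProbabilityMeasure ν := Measure.isProbabilityMeasure_map hC.aemeasurable
  have hIic : G 0 = ν.real (Iic 0) := by
    rw [hG, map_measureReal_apply hC measurableSet_Iic]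
    rfl
  have hIci : ν.real (Ici 0) = 1 - G 0 := by
    rw [hIic, ← probReal_compl_eq_one_sub measurableSet_Iic, compl_Iic,
      measureReal_congr Ioi_ae_eq_Ici]
  have htransfer : MeasurableSet {q : ℝ × ℝ | q.2 ∈ uIcc 0 q.1} :=
    (measurableSet_le (by fun_prop) measurable_snd).inter
      (measurableSet_le measurable_snd (by fun_prop))
  have hprob : (μ {ω | |C' ω - C ω / 2| ≤ |C ω / 2|}).toReal = 1 / 2 - G 0 + G 0 ^ 2 := by
    have h : 2 * (ν.prod ν).real {q | q.2 ∈ uIcc 0 q.1} =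
        ν.real (Ici 0) ^ 2 + ν.real (Iic 0) ^ 2 := by
      simpa [measureReal_def, ENNReal.toReal_add] using
        congrArg ENNReal.toReal (Measure.two_mul_prod_self_setOf_snd_mem_uIcc ν 0)
    have hevent : {ω | |C' ω - C ω / 2| ≤ |C ω / 2|} =
        (fun ω => (C ω, C' ω)) ⁻¹' {q | q.2 ∈ uIcc 0 q.1} := by
      ext ω
      exact abs_sub_half_le_abs_half_iff
    rw [hevent, hid.measure_preimage_prodMk_of_indepFun hC hC' hindep htransfer, ← measureReal_def]
    rw [hIci, ← hIic] at h
    linarith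
  obtain ⟨hp0, hp1⟩ : 0 ≤ G 0 ∧ G 0 ≤ 1 := by
    rw [hIic]
    exact ⟨measureReal_nonneg, measureReal_le_one⟩
  exact ⟨hprob, by nlinarith [sq_nonneg (G 0 - 1 / 2)], by nlinarith, by grind⟩
end

section
/- Let C and C' be i.i.d. random vectors in ℝᵈ with nonatomic law. Then P(‖C' − C/2‖₂ ≤ ‖C/2‖₂) ≤ 1/2. -/
open MeasureTheory ProbabilityTheory

/-!
Write `A` for the event `‖C' - C/2‖ ≤ ‖C/2‖` and `B` for the same event with `C` and `C'`
exchanged. Since `(C, C')` and `(C', C)` have the same law, `P(A) = P(B)`. In an inner product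
space, `‖b - a/2‖ ≤ ‖a/2‖` means `‖b‖² ≤ ⟪a, b⟫`, so on `A ∩ B` we get
`‖C - C'‖² = ‖C‖² + ‖C'‖² - 2⟪C, C'⟫ ≤ 0`, i.e. `C = C'`, an event of probability zero because
the law of `C` has no atoms. Hence `2 P(A) = P(A ∪ B) ≤ 1`.
-/

section InnerProductSpace

variable {E : Type*} [NormedAddCommGroup E] [InnerProductSpace ℝ E]

lemma norm_sub_half_smul_le_iff {a b : E} :
    ‖b - (1 / 2 : ℝ) • a‖ ≤ ‖(1 / 2 : ℝ) • a‖ ↔ ‖b‖ ^ 2 ≤ inner ℝ a b := by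
  rw [← sq_le_sq₀ (norm_nonneg _) (norm_nonneg _), norm_sub_sq_real, real_inner_smul_right,
    real_inner_comm]
  constructor <;> intro h <;> linarith

lemma eq_of_norm_sub_half_smul_le {a b : E} (hab : ‖b - (1 / 2 : ℝ) • a‖ ≤ ‖(1 / 2 : ℝ) • a‖)
    (hba : ‖a - (1 / 2 : ℝ) • b‖ ≤ ‖(1 / 2 : ℝ) • b‖) : a = b := by
  have hb := norm_sub_half_smul_le_iff.mp hab
  have ha := norm_sub_half_smul_le_iff.mp hba
  rw [real_inner_comm] at ha
  have hsub : ‖a - b‖ ^ 2 ≤ 0 := by rw [norm_sub_sq_real]; linarith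
  rw [← sub_eq_zero, ← norm_eq_zero]
  nlinarith [norm_nonneg (a - b)]

end InnerProductSpace

lemma norm2_eq_norm_toLp {k : ℕ} (v : Fin k → ℝ) :
    norm2 v = ‖(WithLp.toLp 2 v : EuclideanSpace ℝ (Fin k))‖ := by
  simp [norm2, EuclideanSpace.norm_eq]

lemma continuous_norm2 {k : ℕ} : Continuous (norm2 (k := k)) := by
  simp only [funext norm2_eq_norm_toLp]
  fun_prop

lemma eq_of_norm2_sub_half_smul_le {k : ℕ} {a b : Fin k → ℝ}
    (hab : norm2 (b - (1 / 2 : ℝ) • a) ≤ norm2 ((1 / 2 : ℝ) • a))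
    (hba : norm2 (a - (1 / 2 : ℝ) • b) ≤ norm2 ((1 / 2 : ℝ) • b)) : a = b := by
  simp only [norm2_eq_norm_toLp, WithLp.toLp_sub, WithLp.toLp_smul] at hab hba
  exact WithLp.toLp_injective 2 (eq_of_norm_sub_half_smul_le hab hba)

namespace ProbabilityTheory

variable {Ω E : Type*} [MeasurableSpace Ω] [MeasurableSpace E] {μ : Measure Ω} {X Y : Ω → E}

lemma IndepFun.map_prodMk_swap_eq [IsFiniteMeasure μ] (hindep : IndepFun X Y μ)
    (hid : IdentDistrib X Y μ μ) :
    μ.map (fun ω ↦ (Y ω, X ω)) = μ.map (fun ω ↦ (X ω, Y ω)) := by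
  rw [hindep.map_prod_eq_prod_map_map hid.aemeasurable_fst hid.aemeasurable_snd,
    hindep.symm.map_prod_eq_prod_map_map hid.aemeasurable_snd hid.aemeasurable_fst, hid.map_eq]

lemma IndepFun.measure_eq_eq_zero [IsFiniteMeasure μ] [MeasurableEq E] (hindep : IndepFun X Y μ)
    (hX : AEMeasurable X μ) (hY : AEMeasurable Y μ) [NullSingletonClass (μ.map X)] :
    μ {ω | X ω = Y ω} = 0 := by
  have hdiag : μ {ω | X ω = Y ω} = μ.map (fun ω ↦ (X ω, Y ω)) (Set.diagonal E) :=
    (Measure.map_apply_of_aemeasurable (hX.prodMk hY) measurableSet_diagonal).symm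
  have hslice (y : E) : (fun x ↦ (x, y)) ⁻¹' Set.diagonal E = {y} := by ext; simp
  rw [hdiag, hindep.map_prod_eq_prod_map_map hX hY, Measure.prod_apply_symm measurableSet_diagonal]
  simp [hslice]

theorem IndepFun.two_mul_measure_mem_le_one [IsProbabilityMeasure μ] [MeasurableEq E]
    (hindep : IndepFun X Y μ) (hid : IdentDistrib X Y μ μ) [NullSingletonClass (μ.map X)]
    {S : Set (E × E)} (hS : MeasurableSet S)
    (hanti : ∀ x y, (x, y) ∈ S → (y, x) ∈ S → x = y) :
    2 * μ {ω | (X ω, Y ω) ∈ S} ≤ 1 := by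
  set A := {ω | (X ω, Y ω) ∈ S}
  set B := {ω | (Y ω, X ω) ∈ S}
  have hXY := hid.aemeasurable_fst.prodMk hid.aemeasurable_snd
  have hYX := hid.aemeasurable_snd.prodMk hid.aemeasurable_fst
  have hBA : μ B = μ A := calc
    μ B = μ.map (fun ω ↦ (Y ω, X ω)) S := (Measure.map_apply_of_aemeasurable hYX hS).symm
    _ = μ.map (fun ω ↦ (X ω, Y ω)) S := by rw [hindep.map_prodMk_swap_eq hid]
    _ = μ A := Measure.map_apply_of_aemeasurable hXY hS
  have hdisj : AEDisjoint μ A B := measure_mono_null (fun ω ⟨hA, hB⟩ ↦ hanti _ _ hA hB)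
    (hindep.measure_eq_eq_zero hid.aemeasurable_fst hid.aemeasurable_snd)
  have hB : NullMeasurableSet B μ := hYX.nullMeasurableSet_preimage hS
  calc 2 * μ A = μ (A ∪ B) := by rw [measure_union₀ hB hdisj, hBA, two_mul]
    _ ≤ 1 := prob_le_one

end ProbabilityTheory

theorem transfer_prob_le_half_general {Ω : Type*} [MeasurableSpace Ω] {d : ℕ}
    (μ : Measure Ω) [IsProbabilityMeasure μ]
    (C C' : Ω → (Fin d → ℝ))
    (hindep : IndepFun C C' μ) (hid : IdentDistrib C C' μ μ)
    [NullSingletonClass (μ.map C)] :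
    (μ {ω | norm2 (C' ω - (1 / 2 : ℝ) • C ω) ≤ norm2 ((1 / 2 : ℝ) • C ω)}).toReal
      ≤ 1 / 2 := by
  have hS : MeasurableSet {p : (Fin d → ℝ) × (Fin d → ℝ) |
      norm2 (p.2 - (1 / 2 : ℝ) • p.1) ≤ norm2 ((1 / 2 : ℝ) • p.1)} :=
    measurableSet_le (continuous_norm2.comp (by fun_prop)).measurable
      (continuous_norm2.comp (by fun_prop)).measurable
  have h := hindep.two_mul_measure_mem_le_one hid hS fun _ _ ↦ eq_of_norm2_sub_half_smul_le
  simp only [Set.mem_ofPred_eq] at h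
  have h' := ENNReal.toReal_mono ENNReal.one_ne_top h
  rw [ENNReal.toReal_mul, ENNReal.toReal_ofNat, ENNReal.toReal_one] at h'
  linarith

/-- For i.i.d. random vectors `C`, `C'` in ℝᵈ with nonatomic law,
`P(‖C' − C/2‖₂ ≤ ‖C/2‖₂) ≤ 1/2`. -/
theorem transfer_prob_le_half {Ω : Type*} [MeasurableSpace Ω] {d : ℕ}
    (μ : Measure Ω) [IsProbabilityMeasure μ]
    (C C' : Ω → (Fin d → ℝ)) (hC : Measurable C) (hC' : Measurable C')
    (hindep : IndepFun C C' μ) (hid : IdentDistrib C C' μ μ)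
    [NullSingletonClass (μ.map C)] :
    (μ {ω | norm2 (C' ω - (1 / 2 : ℝ) • C ω) ≤ norm2 ((1 / 2 : ℝ) • C ω)}).toReal
      ≤ 1 / 2 :=
  transfer_prob_le_half_general μ C C' hindep hid
end

section
/- In the setting of ε-solution sets: suppose y ∈ T_ε(x) and x ∈ T_ε(y), i.e., there exist v ∈ V_ε(x) fooling y and v' ∈ V_ε(y) fooling x. If V_ε(x) ∩ V_ε(y) = ∅, then ‖v‖ > ‖u‖ for all u ∈ V_ε(y) and ‖v'‖ > ‖u'‖ for all u' ∈ V_ε(x); since v' ∈ V_ε(y) and v ∈ V_ε(x), this is a contradiction. Hence V_ε(x) ∩ V_ε(y) ≠ ∅. -/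
section EpsSolutionSet

variable {α V : Type*} [Norm V]

/-- The ε-solution set `V_ε(x)`. -/
def epsSolutionSet (Fools : α → V → Prop) (m : α → ℝ) (ε : ℝ) (x : α) : Set V :=
  {v | ‖v‖ - m x ≤ ε ∧ Fools x v}

theorem epsSolutionSet.norm_lt_of_fools_of_notMem {Fools : α → V → Prop} {m : α → ℝ} {ε : ℝ}
    {y : α} {u v : V} (hu : u ∈ epsSolutionSet Fools m ε y) (hv : Fools y v)
    (hv' : v ∉ epsSolutionSet Fools m ε y) : ‖u‖ < ‖v‖ := by
  have hvy : ε < ‖v‖ - m y := lt_of_not_ge fun h => hv' ⟨h, hv⟩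
  linarith [hu.1]

end EpsSolutionSet

theorem inter_nonempty_of_mutual_transfer_general {α V : Type*} [NormedAddCommGroup V]
    (Fools : α → V → Prop) (m : α → ℝ) (ε : ℝ)
    (x y : α)
    (hxy : ∃ v : V, (‖v‖ - m x ≤ ε ∧ Fools x v) ∧ Fools y v)
    (hyx : ∃ v' : V, (‖v'‖ - m y ≤ ε ∧ Fools y v') ∧ Fools x v') :
    ({v : V | ‖v‖ - m x ≤ ε ∧ Fools x v} ∩
     {v : V | ‖v‖ - m y ≤ ε ∧ Fools y v}).Nonempty := by
  obtain ⟨v, hv, hvy⟩ := hxy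
  obtain ⟨w, hw, hwx⟩ := hyx
  by_contra hdisj
  have hv' : v ∉ epsSolutionSet Fools m ε y := fun h => hdisj ⟨v, hv, h⟩
  have hw' : w ∉ epsSolutionSet Fools m ε x := fun h => hdisj ⟨w, h, hw⟩
  exact lt_asymm (epsSolutionSet.norm_lt_of_fools_of_notMem hw hvy hv')
    (epsSolutionSet.norm_lt_of_fools_of_notMem hv hwx hw')

/-- hard direction of Step 1, Theorem 2: if `x` and `y` are mutually
transferable — some `v ∈ V_ε(x)` fools `y` and some `v' ∈ V_ε(y)` fools `x` — then
the ε-solution sets `V_ε(x)` and `V_ε(y)` have nonempty intersection. -/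
theorem inter_nonempty_of_mutual_transfer {α V : Type*} [NormedAddCommGroup V]
    (Fools : α → V → Prop) (m : α → ℝ) (ε : ℝ) (hε : 0 < ε)
    (hm : ∀ x, IsLeast {r : ℝ | ∃ v, Fools x v ∧ ‖v‖ = r} (m x))
    (x y : α)
    (hxy : ∃ v : V, (‖v‖ - m x ≤ ε ∧ Fools x v) ∧ Fools y v)
    (hyx : ∃ v' : V, (‖v'‖ - m y ≤ ε ∧ Fools y v') ∧ Fools x v') :
    ({v : V | ‖v‖ - m x ≤ ε ∧ Fools x v} ∩
     {v : V | ‖v‖ - m y ≤ ε ∧ Fools y v}).Nonempty :=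
  inter_nonempty_of_mutual_transfer_general Fools m ε x y hxy hyx
end
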